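/- arXiv:1412.6231 — 2 statements merged into one kernel-verified Lean document; each statement's English description precedes it below -/
import Mathlib

section
/- For every d ∈ ℕ, d ≥ 1, and all x, y ∈ ℝ^d with x ≠ 0 and y ≠ 0, the MpCN proposal density satisfies the detailed-balance identity ‖x‖^{-d}·r(x,y) = ‖y‖^{-d}·r(y,x); consequently the MpCN proposal transition kernel R(x,dy) = r(x,y)dy is reversible with respect to the σ-finite measure ‖x‖^{-d}dx on ℝ^d. -/
open MeasureTheory ENNReal Filter Topology

noncomputable section

/-- The state space in dimension `d`: `d`-dimensional Euclidean space. -/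
abbrev Euc (d : ℕ) : Type := EuclideanSpace ℝ (Fin d)

/-- The inverse-Gamma(ν, α) probability density function. -/
def invGammaPdf (ν α z : ℝ) : ℝ :=
  α ^ ν / Real.Gamma ν * z ^ (-ν - 1) * Real.exp (-α / z)

/-- The MpCN proposal density
`r(x,y) = ∫₀^∞ g(z; d/2, ‖x‖²/2) (2π(1-ρ)z)^{-d/2} exp(-‖y - √ρ·x‖²/(2(1-ρ)z)) dz`. -/
def mpcnPropDen (ρ : ℝ) (d : ℕ) (x y : Euc d) : ℝ :=
  ∫ z in Set.Ioi (0 : ℝ),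
    invGammaPdf ((d : ℝ) / 2) (‖x‖ ^ 2 / 2) z *
      ((2 * Real.pi * (1 - ρ) * z) ^ (-(d : ℝ) / 2) *
        Real.exp (-‖y - Real.sqrt ρ • x‖ ^ 2 / (2 * (1 - ρ) * z)))

/-- The MpCN acceptance probability for target density `p`. -/
def mpcnAccept (d : ℕ) (p : Euc d → ℝ) (x y : Euc d) : ℝ :=
  min 1 ((p y * ‖x‖ ^ (-(d : ℝ))) / (p x * ‖y‖ ^ (-(d : ℝ))))

/-- The MpCN transition kernel for target density `p`, as a measure-valued map. -/
def mpcnKernel (ρ : ℝ) (d : ℕ) (p : Euc d → ℝ) (x : Euc d) : Measure (Euc d) :=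
  volume.withDensity (fun y => ENNReal.ofReal (mpcnAccept d p x y * mpcnPropDen ρ d x y)) +
    (1 - ∫⁻ y, ENNReal.ofReal (mpcnAccept d p x y * mpcnPropDen ρ d x y)) • Measure.dirac x

/-!
Multiplying by `‖x‖^{-d}` cancels the factor `(‖x‖²/2)^{d/2}` of the inverse-Gamma density up
to a constant, and the two Gaussian-type exponents add up to
`((1-ρ)‖x‖² + ‖y - √ρ x‖²) / (2(1-ρ)z) = (‖x‖² + ‖y‖² - 2√ρ⟪x,y⟫) / (2(1-ρ)z)`,
which is symmetric in `x` and `y`. Hence the weighted integrands of `r(x,y)` and `r(y,x)` agree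
for every `z`. Reversibility follows by Tonelli, since `{0}` is Lebesgue-null when `d ≥ 1`.
-/

lemma sub_mul_norm_sq_add_norm_sub_sqrt_smul_sq_comm {E : Type*} [NormedAddCommGroup E]
    [InnerProductSpace ℝ E] {ρ : ℝ} (hρ : 0 ≤ ρ) (x y : E) :
    (1 - ρ) * ‖x‖ ^ 2 + ‖y - Real.sqrt ρ • x‖ ^ 2 =
      (1 - ρ) * ‖y‖ ^ 2 + ‖x - Real.sqrt ρ • y‖ ^ 2 := by
  simp only [norm_sub_sq_real, real_inner_smul_right, norm_smul, Real.norm_eq_abs,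
    abs_of_nonneg (Real.sqrt_nonneg ρ), mul_pow, Real.sq_sqrt hρ, real_inner_comm x y]
  ring

lemma rpow_neg_mul_sq_div_two_rpow_half {r : ℝ} (hr : 0 < r) (a : ℝ) :
    r ^ (-a) * (r ^ 2 / 2) ^ (a / 2) = 2 ^ (-a / 2) := by
  have hsq : (r ^ 2) ^ (a / 2) = r ^ a := by
    rw [← Real.rpow_natCast, ← Real.rpow_mul hr.le]
    ring_nf
  rw [Real.div_rpow (by positivity) zero_le_two, hsq, Real.rpow_neg hr.le, neg_div,
    Real.rpow_neg zero_le_two, ← div_eq_inv_mul,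
    div_div_cancel_left' (Real.rpow_pos_of_pos hr a).ne']

def mpcnIntegrand (ρ : ℝ) (d : ℕ) (x y : Euc d) (z : ℝ) : ℝ :=
  invGammaPdf ((d : ℝ) / 2) (‖x‖ ^ 2 / 2) z *
    ((2 * Real.pi * (1 - ρ) * z) ^ (-(d : ℝ) / 2) *
      Real.exp (-‖y - Real.sqrt ρ • x‖ ^ 2 / (2 * (1 - ρ) * z)))

lemma mpcnPropDen_eq_integral (ρ : ℝ) (d : ℕ) (x y : Euc d) :
    mpcnPropDen ρ d x y = ∫ z in Set.Ioi 0, mpcnIntegrand ρ d x y z := rfl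

lemma norm_rpow_neg_mul_mpcnIntegrand {ρ : ℝ} (hρ : ρ ≠ 1) (d : ℕ) {x : Euc d} (hx : x ≠ 0)
    (y : Euc d) (z : ℝ) :
    ‖x‖ ^ (-(d : ℝ)) * mpcnIntegrand ρ d x y z =
      2 ^ (-(d : ℝ) / 2) / Real.Gamma ((d : ℝ) / 2) * z ^ (-((d : ℝ) / 2) - 1) *
        (2 * Real.pi * (1 - ρ) * z) ^ (-(d : ℝ) / 2) *
        Real.exp (-((1 - ρ) * ‖x‖ ^ 2 + ‖y - Real.sqrt ρ • x‖ ^ 2) / (2 * (1 - ρ) * z)) := by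
  have h1ρ : 1 - ρ ≠ 0 := sub_ne_zero.mpr hρ.symm
  have hexp : Real.exp (-(‖x‖ ^ 2 / 2) / z) *
      Real.exp (-‖y - Real.sqrt ρ • x‖ ^ 2 / (2 * (1 - ρ) * z)) =
      Real.exp (-((1 - ρ) * ‖x‖ ^ 2 + ‖y - Real.sqrt ρ • x‖ ^ 2) / (2 * (1 - ρ) * z)) := by
    rw [← Real.exp_add]
    congr 1
    rcases eq_or_ne z 0 with rfl | hz
    · simp
    · field_simp
      ring
  rw [← rpow_neg_mul_sq_div_two_rpow_half (norm_pos_iff.mpr hx), ← hexp, mpcnIntegrand,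
    invGammaPdf]
  ring

lemma norm_rpow_neg_mul_mpcnIntegrand_comm {ρ : ℝ} (hρ₀ : 0 ≤ ρ) (hρ₁ : ρ ≠ 1) (d : ℕ)
    {x y : Euc d} (hx : x ≠ 0) (hy : y ≠ 0) (z : ℝ) :
    ‖x‖ ^ (-(d : ℝ)) * mpcnIntegrand ρ d x y z = ‖y‖ ^ (-(d : ℝ)) * mpcnIntegrand ρ d y x z := by
  rw [norm_rpow_neg_mul_mpcnIntegrand hρ₁ d hx, norm_rpow_neg_mul_mpcnIntegrand hρ₁ d hy,
    sub_mul_norm_sq_add_norm_sub_sqrt_smul_sq_comm hρ₀]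

lemma norm_rpow_neg_mul_mpcnPropDen_comm {ρ : ℝ} (hρ₀ : 0 ≤ ρ) (hρ₁ : ρ ≠ 1) (d : ℕ)
    {x y : Euc d} (hx : x ≠ 0) (hy : y ≠ 0) :
    ‖x‖ ^ (-(d : ℝ)) * mpcnPropDen ρ d x y = ‖y‖ ^ (-(d : ℝ)) * mpcnPropDen ρ d y x := by
  simp only [mpcnPropDen_eq_integral, ← integral_const_mul,
    norm_rpow_neg_mul_mpcnIntegrand_comm hρ₀ hρ₁ d hx hy]

lemma measurable_mpcnPropDen (ρ : ℝ) (d : ℕ) :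
    Measurable (Function.uncurry (mpcnPropDen ρ d)) := by
  have h : StronglyMeasurable
      fun q : (Euc d × Euc d) × ℝ => mpcnIntegrand ρ d q.1.1 q.1.2 q.2 := by
    apply Measurable.stronglyMeasurable
    unfold mpcnIntegrand invGammaPdf
    fun_prop
  exact (h.integral_prod_right' (ν := volume.restrict (Set.Ioi 0))).measurable

lemma setLIntegral_mul_setLIntegral_comm_of_ae {α : Type*} [MeasurableSpace α] {μ : Measure α}
    [SFinite μ] {w : α → ENNReal} {k : α → α → ENNReal} (hw : Measurable w)
    (hk : Measurable (Function.uncurry k))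
    (hbal : ∀ᵐ x ∂μ, ∀ᵐ y ∂μ, w x * k x y = w y * k y x) (A B : Set α) :
    ∫⁻ x in A, w x * ∫⁻ y in B, k x y ∂μ ∂μ = ∫⁻ x in B, w x * ∫⁻ y in A, k x y ∂μ ∂μ := by
  have hk' : Measurable (Function.uncurry fun x y => w y * k y x) :=
    (hw.comp measurable_snd).mul (hk.comp measurable_swap)
  calc ∫⁻ x in A, w x * ∫⁻ y in B, k x y ∂μ ∂μ
      = ∫⁻ x in A, ∫⁻ y in B, w x * k x y ∂μ ∂μ := by
        simp only [← lintegral_const_mul _ hk.of_uncurry_left]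
    _ = ∫⁻ x in A, ∫⁻ y in B, w y * k y x ∂μ ∂μ := by
        refine lintegral_congr_ae (ae_restrict_of_ae ?_)
        filter_upwards [hbal] with x hx
        exact lintegral_congr_ae (ae_restrict_of_ae hx)
    _ = ∫⁻ y in B, ∫⁻ x in A, w y * k y x ∂μ ∂μ := lintegral_lintegral_swap hk'.aemeasurable
    _ = ∫⁻ x in B, w x * ∫⁻ y in A, k x y ∂μ ∂μ := by
        simp only [← lintegral_const_mul _ hk.of_uncurry_left]

/-- The MpCN proposal density satisfies the detailed-balance identity
`‖x‖^{-d} r(x,y) = ‖y‖^{-d} r(y,x)`, and consequently the MpCN proposal transition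
kernel `R(x,dy) = r(x,y) dy` is reversible with respect to the σ-finite measure
`‖x‖^{-d} dx` on `ℝ^d`. -/
theorem mpcn_proposal_detailed_balance (ρ : ℝ) (hρ : ρ ∈ Set.Ioo (0 : ℝ) 1)
    (d : ℕ) (hd : 1 ≤ d) :
    (∀ x y : Euc d, x ≠ 0 → y ≠ 0 →
      ‖x‖ ^ (-(d : ℝ)) * mpcnPropDen ρ d x y = ‖y‖ ^ (-(d : ℝ)) * mpcnPropDen ρ d y x) ∧
    (∀ A B : Set (Euc d), MeasurableSet A → MeasurableSet B →
      ∫⁻ x in A, ENNReal.ofReal (‖x‖ ^ (-(d : ℝ))) *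
          (∫⁻ y in B, ENNReal.ofReal (mpcnPropDen ρ d x y)) =
        ∫⁻ x in B, ENNReal.ofReal (‖x‖ ^ (-(d : ℝ))) *
          (∫⁻ y in A, ENNReal.ofReal (mpcnPropDen ρ d x y))) := by
  have hbal : ∀ x y : Euc d, x ≠ 0 → y ≠ 0 →
      ‖x‖ ^ (-(d : ℝ)) * mpcnPropDen ρ d x y = ‖y‖ ^ (-(d : ℝ)) * mpcnPropDen ρ d y x :=
    fun x y hx hy => norm_rpow_neg_mul_mpcnPropDen_comm hρ.1.le hρ.2.ne d hx hy
  refine ⟨hbal, fun A B _ _ => ?_⟩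
  have : Nonempty (Fin d) := ⟨⟨0, hd⟩⟩
  refine setLIntegral_mul_setLIntegral_comm_of_ae (by fun_prop)
    (measurable_mpcnPropDen ρ d).ennreal_ofReal ?_ A B
  filter_upwards [volume.ae_ne 0] with x hx
  filter_upwards [volume.ae_ne 0] with y hy
  rw [← ENNReal.ofReal_mul (by positivity), ← ENNReal.ofReal_mul (by positivity), hbal x y hx hy]
end
end

section
/- Let q : (0,∞) → (0,∞) be a strictly positive measurable function with ∫_0^∞ q(u) du ≤ 1. Then for every c ∈ (0,∞), ∫_c^∞ 1/(u²·q(u)) du = +∞ and ∫_0^c 1/(u²·q(u)) du = +∞. Consequently, the scale function s(x) = ∫_c^x 1/(u²·q(u)) du satisfies s(x) → +∞ as x → +∞ and s(x) → −∞ as x → 0+. -/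
open MeasureTheory ENNReal Filter Topology Set

/-!
For `u > 0`, AM–GM gives `2 / u ≤ q u + 1 / (u ^ 2 * q u)`. Integrating over `(c, ∞)` or over
`(0, c)`, the left side diverges while `q` contributes at most `1`, so the integral of
`1 / (u ^ 2 * q u)` diverges on both. The limits of the scale function follow by continuity from
below of the measure with this density.
-/

theorem tendsto_measure_biUnion_gt {α ι : Type*} [MeasurableSpace α] {μ : Measure α}
    [LinearOrder ι] [TopologicalSpace ι] [OrderTopology ι] [FirstCountableTopology ι]
    [DenselyOrdered ι] {s : ι → Set α} {a : ι} (hm : ∀ i j, a < i → i ≤ j → s j ⊆ s i) :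
    Tendsto (μ ∘ s) (𝓝[>] a) (𝓝 (μ (⋃ r > a, s r))) := by
  have : (atBot : Filter (Ioi a)).IsCountablyGenerated := by
    rw [← comap_coe_Ioi_nhdsGT a]
    infer_instance
  simp_rw [← map_coe_Ioi_atBot a, tendsto_map'_iff, ← mem_Ioi, biUnion_eq_iUnion]
  exact tendsto_measure_iUnion_atBot fun i j h ↦ hm i j i.2 h

theorem tendsto_setLIntegral_Ioc_atTop (μ : Measure ℝ) (f : ℝ → ℝ≥0∞) (a : ℝ) :
    Tendsto (fun x ↦ ∫⁻ u in Ioc a x, f u ∂μ) atTop (𝓝 (∫⁻ u in Ioi a, f u ∂μ)) := by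
  simp_rw [← withDensity_apply f measurableSet_Ioc, ← withDensity_apply f measurableSet_Ioi,
    ← iUnion_Ioc_right]
  exact tendsto_measure_iUnion_atTop fun _ _ h ↦ Ioc_subset_Ioc_right h

theorem tendsto_setLIntegral_Ioc_nhdsGT (μ : Measure ℝ) (f : ℝ → ℝ≥0∞) (a b : ℝ) :
    Tendsto (fun x ↦ ∫⁻ u in Ioc x b, f u ∂μ) (𝓝[>] a) (𝓝 (∫⁻ u in Ioc a b, f u ∂μ)) := by
  have hunion : ⋃ r > a, Ioc r b = Ioc a b := by
    ext x
    simp only [mem_iUnion, mem_Ioc, exists_prop]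
    refine ⟨fun ⟨r, har, hrx, hxb⟩ ↦ ⟨har.trans hrx, hxb⟩, fun ⟨hax, hxb⟩ ↦ ?_⟩
    obtain ⟨r, har, hrx⟩ := exists_between hax
    exact ⟨r, har, hrx, hxb⟩
  simp_rw [← withDensity_apply f measurableSet_Ioc, ← hunion]
  exact tendsto_measure_biUnion_gt fun _ _ _ h ↦ Ioc_subset_Ioc_left h

theorem two_mul_inv_le_add_one_div_sq_mul (u : ℝ) {a : ℝ} (ha : 0 < a) :
    2 * u⁻¹ ≤ a + 1 / (u ^ 2 * a) := by
  rcases eq_or_ne u 0 with rfl | hu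
  · simp [ha.le]
  rw [← sub_nonneg]
  have h : a + 1 / (u ^ 2 * a) - 2 * u⁻¹ = (u * a - 1) ^ 2 / (u ^ 2 * a) := by
    field_simp
    ring
  rw [h]
  positivity

theorem lintegral_ofReal_one_div_sq_mul_eq_top {μ : Measure ℝ} {q : ℝ → ℝ}
    (hq : AEMeasurable q μ) (hq_pos : ∀ᵐ u ∂μ, 0 < q u)
    (hq_fin : ∫⁻ u, ENNReal.ofReal (q u) ∂μ ≠ ∞) (hinv : ∫⁻ u, ENNReal.ofReal u⁻¹ ∂μ = ∞) :
    ∫⁻ u, ENNReal.ofReal (1 / (u ^ 2 * q u)) ∂μ = ∞ := by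
  have hamgm : ∀ᵐ u ∂μ,
      2 * ENNReal.ofReal u⁻¹ ≤ ENNReal.ofReal (q u) + ENNReal.ofReal (1 / (u ^ 2 * q u)) := by
    filter_upwards [hq_pos] with u hu
    calc 2 * ENNReal.ofReal u⁻¹ = ENNReal.ofReal (2 * u⁻¹) := by
          rw [ENNReal.ofReal_mul zero_le_two, ENNReal.ofReal_ofNat]
      _ ≤ ENNReal.ofReal (q u + 1 / (u ^ 2 * q u)) :=
          ENNReal.ofReal_le_ofReal (two_mul_inv_le_add_one_div_sq_mul u hu)
      _ ≤ _ := ENNReal.ofReal_add_le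
  have htop : ∞ ≤ ∫⁻ u, ENNReal.ofReal (q u) ∂μ + ∫⁻ u, ENNReal.ofReal (1 / (u ^ 2 * q u)) ∂μ :=
    calc ∞ = ∫⁻ u, 2 * ENNReal.ofReal u⁻¹ ∂μ := by
          rw [lintegral_const_mul' _ _ ofNat_ne_top, hinv, mul_top two_ne_zero]
      _ ≤ _ := lintegral_mono_ae hamgm
      _ = _ := lintegral_add_left' hq.ennreal_ofReal _
  exact (ENNReal.add_eq_top.1 (top_le_iff.1 htop)).resolve_left hq_fin

theorem lintegral_ofReal_inv_Ioi_eq_top {c : ℝ} (hc : 0 ≤ c) :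
    ∫⁻ u in Ioi c, ENNReal.ofReal u⁻¹ = ∞ := by
  by_contra h
  refine not_integrableOn_Ioi_inv ((lintegral_ofReal_ne_top_iff_integrable
    measurable_inv.aestronglyMeasurable ?_).1 h)
  filter_upwards [ae_restrict_mem measurableSet_Ioi] with u hu using inv_nonneg.2 (hc.trans hu.le)

theorem lintegral_ofReal_inv_Ioo_zero_eq_top {c : ℝ} (hc : 0 < c) :
    ∫⁻ u in Ioo 0 c, ENNReal.ofReal u⁻¹ = ∞ := by
  by_contra h
  have hint : IntegrableOn (·⁻¹) (Ioo 0 c) := (lintegral_ofReal_ne_top_iff_integrable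
    measurable_inv.aestronglyMeasurable <| by
      filter_upwards [ae_restrict_mem measurableSet_Ioo] with u hu using inv_nonneg.2 hu.1.le).1 h
  have := (intervalIntegrable_iff_integrableOn_Ioo_of_le hc.le).2 hint
  simp [hc.ne, hc.le] at this

/-- If `q : (0,∞) → (0,∞)` is measurable, strictly positive and
`∫₀^∞ q ≤ 1`, then for every `c > 0` the scale-function integrand `1/(u² q(u))` has
divergent integral both on `(c,∞)` and on `(0,c)`; consequently the scale function
`s(x) = ∫_c^x du/(u² q(u))` tends to `+∞` as `x → +∞` and to `-∞` as `x → 0+`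
(equivalently, `∫_{(c,x]} → ∞` as `x → ∞` and `∫_{(x,c]} → ∞` as `x → 0+`). -/
theorem scale_function_diverges (q : ℝ → ℝ) (hq_meas : Measurable q)
    (hq_pos : ∀ u, 0 < u → 0 < q u)
    (hq_int : ∫⁻ u in Set.Ioi (0 : ℝ), ENNReal.ofReal (q u) ≤ 1) :
    ∀ c : ℝ, 0 < c →
      (∫⁻ u in Set.Ioi c, ENNReal.ofReal (1 / (u ^ 2 * q u)) = ⊤) ∧
      (∫⁻ u in Set.Ioo 0 c, ENNReal.ofReal (1 / (u ^ 2 * q u)) = ⊤) ∧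
      Tendsto (fun x : ℝ => ∫⁻ u in Set.Ioc c x, ENNReal.ofReal (1 / (u ^ 2 * q u)))
        atTop (𝓝 ⊤) ∧
      Tendsto (fun x : ℝ => ∫⁻ u in Set.Ioc x c, ENNReal.ofReal (1 / (u ^ 2 * q u)))
        (𝓝[>] 0) (𝓝 ⊤) := by
  intro c hc
  have diverges_on : ∀ S ⊆ Ioi (0 : ℝ), MeasurableSet S → ∫⁻ u in S, ENNReal.ofReal u⁻¹ = ∞ →
      ∫⁻ u in S, ENNReal.ofReal (1 / (u ^ 2 * q u)) = ∞ := fun S hS0 hS hinv ↦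
    lintegral_ofReal_one_div_sq_mul_eq_top hq_meas.aemeasurable
      ((ae_restrict_mem hS).mono fun u hu ↦ hq_pos u (hS0 hu))
      ((lintegral_mono_set hS0).trans_lt (hq_int.trans_lt one_lt_top)).ne hinv
  have hIoi := diverges_on _ (Ioi_subset_Ioi hc.le) measurableSet_Ioi
    (lintegral_ofReal_inv_Ioi_eq_top hc.le)
  have hIoo := diverges_on _ Ioo_subset_Ioi_self measurableSet_Ioo
    (lintegral_ofReal_inv_Ioo_zero_eq_top hc)
  refine ⟨hIoi, hIoo, hIoi ▸ tendsto_setLIntegral_Ioc_atTop _ _ c, ?_⟩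
  have hIoc : ∫⁻ u in Ioc 0 c, ENNReal.ofReal (1 / (u ^ 2 * q u)) = ∞ :=
    top_le_iff.1 (hIoo ▸ lintegral_mono_set Ioo_subset_Ioc_self)
  exact hIoc ▸ tendsto_setLIntegral_Ioc_nhdsGT _ _ 0 c
end
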